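/- arXiv:2409.18250 — 5 statements merged into one kernel-verified Lean document; each statement's English description precedes it below -/
import Mathlib

section
/- For every finite graph G and every 2-colouring of the edges of G (with colours red and blue), there exists a set of at most α(G) monochromatic components whose vertex sets cover V(G). -/
open Finset

/-- König's theorem, cover version: for every finite graph `G` and every 2-colouring
of its edges (each edge gets at least one of red, blue), there is a set of at most
`α(G)` monochromatic components covering `V(G)`. -/
theorem konig_components_cover {V : Type*} [Fintype V]
    (G red blue : SimpleGraph V) (hcol : red ⊔ blue = G) (α : ℕ)
    (hα : IsGreatest {n : ℕ | ∃ s : Finset V,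
      s.card = n ∧ ∀ u ∈ s, ∀ v ∈ s, u ≠ v → ¬ G.Adj u v} α) :
    ∃ 𝒞 : Finset (Set V),
      𝒞.card ≤ α ∧
      (∀ C ∈ 𝒞, (∃ c : red.ConnectedComponent, C = c.supp) ∨
                 (∃ c : blue.ConnectedComponent, C = c.supp)) ∧
      (∀ v : V, ∃ C ∈ 𝒞, v ∈ C) := by
  classical
  haveI : Fintype red.ConnectedComponent := Fintype.ofFinite _
  haveI : Fintype blue.ConnectedComponent := Fintype.ofFinite _
  -- neighbourhood operator from sets of red components to blue components
  set N : Finset red.ConnectedComponent → Finset blue.ConnectedComponent :=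
    fun S => (univ.filter (fun v : V => red.connectedComponentMk v ∈ S)).image
      (fun v => blue.connectedComponentMk v) with hNdef
  have memN : ∀ (S : Finset red.ConnectedComponent) (b : blue.ConnectedComponent),
      b ∈ N S ↔ ∃ v : V, red.connectedComponentMk v ∈ S ∧ blue.connectedComponentMk v = b := by
    intro S b
    simp [hNdef]
  -- choose `S₀` maximizing the deficiency
  obtain ⟨S₀, -, hS₀⟩ := Finset.exists_max_image
    (univ : Finset (Finset red.ConnectedComponent))
    (fun S => (S.card : ℤ) - ((N S).card : ℤ)) ⟨∅, mem_univ _⟩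
  have hS₀' : ∀ S : Finset red.ConnectedComponent,
      (S.card : ℤ) - ((N S).card : ℤ) ≤ (S₀.card : ℤ) - ((N S₀).card : ℤ) :=
    fun S => hS₀ S (mem_univ _)
  have hd0 : (N S₀).card ≤ S₀.card := by
    have hNe : N ∅ = ∅ := by
      ext b; simp [memN]
    have h := hS₀' ∅
    rw [hNe] at h
    simp only [card_empty, Nat.cast_zero, sub_zero, sub_self] at h
    omega
  set d := S₀.card - (N S₀).card with hddef
  -- Hall system with `d` dummy elements
  set t : red.ConnectedComponent → Finset (blue.ConnectedComponent ⊕ Fin d) :=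
    fun r => (N {r}).disjSum univ with htdef
  have hbi : ∀ s : Finset red.ConnectedComponent, s.Nonempty →
      s.biUnion t = (N s).disjSum (univ : Finset (Fin d)) := by
    intro s hs
    ext x
    cases x with
    | inl b =>
        simp only [mem_biUnion, htdef, inl_mem_disjSum, memN, mem_singleton]
        constructor
        · rintro ⟨r, hr, v, rfl, hv2⟩
          exact ⟨v, hr, hv2⟩
        · rintro ⟨v, hv1, hv2⟩
          exact ⟨red.connectedComponentMk v, hv1, v, rfl, hv2⟩
    | inr j =>
        simp only [mem_biUnion, htdef, inr_mem_disjSum, mem_univ, iff_true, and_true]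
        exact ⟨hs.choose, hs.choose_spec⟩
  have hall : ∀ s : Finset red.ConnectedComponent, s.card ≤ (s.biUnion t).card := by
    intro s
    rcases s.eq_empty_or_nonempty with rfl | hs
    · simp
    · rw [hbi s hs, card_disjSum, card_univ, Fintype.card_fin]
      have h := hS₀' s
      omega
  obtain ⟨F, hFinj, hFmem⟩ := (Finset.all_card_le_biUnion_card_iff_exists_injective t).mp hall
  -- the matched red components
  set M : Finset red.ConnectedComponent :=
    univ.filter (fun r => ∃ b, F r = Sum.inl b) with hMdef
  -- counting: |red components| ≤ |M| + d
  have hMcard : Fintype.card red.ConnectedComponent ≤ M.card + d := by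
    have hsub : (univ : Finset red.ConnectedComponent).image F ⊆
        (M.image F) ∪ ((univ : Finset (Fin d)).image Sum.inr) := by
      intro x hx
      obtain ⟨r, -, rfl⟩ := mem_image.mp hx
      rcases hFr : F r with b | j
      · refine mem_union_left _ (mem_image.mpr ⟨r, ?_, hFr⟩)
        simp [hMdef, hFr]
      · exact mem_union_right _ (mem_image.mpr ⟨j, mem_univ _, rfl⟩)
    have h1 : ((univ : Finset red.ConnectedComponent).image F).card =
        Fintype.card red.ConnectedComponent := by
      rw [card_image_of_injective _ hFinj, card_univ]
    have h2 := card_le_card hsub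
    have h3 := card_union_le (M.image F) ((univ : Finset (Fin d)).image (Sum.inr : Fin d → blue.ConnectedComponent ⊕ Fin d))
    have h4 : (M.image F).card ≤ M.card := card_image_le
    have h5 : ((univ : Finset (Fin d)).image (Sum.inr : Fin d → blue.ConnectedComponent ⊕ Fin d)).card = d := by
      rw [card_image_of_injective _ Sum.inr_injective, card_univ, Fintype.card_fin]
    omega
  -- witnesses for matched components
  set P : red.ConnectedComponent → Prop :=
    fun r => ∃ v : V, red.connectedComponentMk v = r ∧
      Sum.inl (blue.connectedComponentMk v) = F r with hPdef
  have hP : ∀ r ∈ M, P r := by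
    intro r hr
    obtain ⟨b, hb⟩ := (mem_filter.mp hr).2
    have hFr := hFmem r
    rw [hb] at hFr
    have hbN : b ∈ N {r} := by
      simpa [htdef, inl_mem_disjSum] using hFr
    obtain ⟨v, hv1, hv2⟩ := (memN _ _).mp hbN
    simp only [mem_singleton] at hv1
    exact ⟨v, hv1, by rw [hv2, hb]⟩
  set vf : red.ConnectedComponent → V :=
    fun r => if h : P r then h.choose else r.out with hvfdef
  have hkey : ∀ r ∈ M, red.connectedComponentMk (vf r) = r ∧
      Sum.inl (blue.connectedComponentMk (vf r)) = F r := by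
    intro r hr
    have h := hP r hr
    simp only [hvfdef, dif_pos h]
    exact h.choose_spec
  -- the independent set of witnesses
  set s : Finset V := M.image vf with hsdef
  have hscard : s.card = M.card := by
    rw [hsdef]
    apply card_image_of_injOn
    intro r1 h1 r2 h2 heq
    rw [← (hkey r1 h1).1, ← (hkey r2 h2).1, heq]
  have hindep : ∀ u ∈ s, ∀ w ∈ s, u ≠ w → ¬ G.Adj u w := by
    intro u hu w hw hne hadj
    obtain ⟨r1, hr1, rfl⟩ := mem_image.mp hu
    obtain ⟨r2, hr2, rfl⟩ := mem_image.mp hw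
    have hr12 : r1 ≠ r2 := by rintro rfl; exact hne rfl
    rw [← hcol, SimpleGraph.sup_adj] at hadj
    rcases hadj with h | h
    · exact hr12 (by
        rw [← (hkey r1 hr1).1, ← (hkey r2 hr2).1]
        exact SimpleGraph.ConnectedComponent.sound h.reachable)
    · have hb : blue.connectedComponentMk (vf r1) = blue.connectedComponentMk (vf r2) :=
        SimpleGraph.ConnectedComponent.sound h.reachable
      have : F r1 = F r2 := by
        rw [← (hkey r1 hr1).2, ← (hkey r2 hr2).2, hb]
      exact hr12 (hFinj this)
  have hMα : M.card ≤ α := by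
    rw [← hscard]
    exact hα.2 ⟨s, rfl, hindep⟩
  -- the cover
  refine ⟨((univ \ S₀).image (fun r : red.ConnectedComponent => r.supp)) ∪
      ((N S₀).image (fun b : blue.ConnectedComponent => b.supp)), ?_, ?_, ?_⟩
  · have h1 := card_union_le ((univ \ S₀).image (fun r : red.ConnectedComponent => r.supp))
      ((N S₀).image (fun b : blue.ConnectedComponent => b.supp))
    have h2 : ((univ \ S₀).image (fun r : red.ConnectedComponent => r.supp)).card ≤
        (univ \ S₀).card := card_image_le
    have h3 : ((N S₀).image (fun b : blue.ConnectedComponent => b.supp)).card ≤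
        (N S₀).card := card_image_le
    have h4 : (univ \ S₀).card = Fintype.card red.ConnectedComponent - S₀.card := by
      rw [card_sdiff_of_subset (subset_univ _), card_univ]
    have h5 : S₀.card ≤ Fintype.card red.ConnectedComponent := by
      rw [← card_univ]; exact card_le_card (subset_univ _)
    omega
  · intro C hC
    rcases mem_union.mp hC with h | h
    · obtain ⟨r, -, rfl⟩ := mem_image.mp h
      exact Or.inl ⟨r, rfl⟩
    · obtain ⟨b, -, rfl⟩ := mem_image.mp h
      exact Or.inr ⟨b, rfl⟩
  · intro v
    by_cases hv : red.connectedComponentMk v ∈ S₀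
    · refine ⟨(blue.connectedComponentMk v).supp, ?_, ?_⟩
      · exact mem_union_right _ (mem_image.mpr ⟨blue.connectedComponentMk v,
          (memN _ _).mpr ⟨v, hv, rfl⟩, rfl⟩)
      · exact (SimpleGraph.ConnectedComponent.mem_supp_iff _ _).mpr rfl
    · refine ⟨(red.connectedComponentMk v).supp, ?_, ?_⟩
      · exact mem_union_left _ (mem_image.mpr ⟨red.connectedComponentMk v,
          mem_sdiff.mpr ⟨mem_univ _, hv⟩, rfl⟩)
      · exact (SimpleGraph.ConnectedComponent.mem_supp_iff _ _).mpr rfl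
end

section
/- In every red-blue colouring of the edges of a finite complete graph, either the red graph has diameter at most 2, or the blue graph has diameter at most 2, or both the red and blue graphs have diameter exactly 3. -/
/-!
If two vertices `u`, `v` are at red distance more than 2, then `uv` is blue and every other
vertex is blue-adjacent to `u` or to `v`, since otherwise it would be a common red neighbour.
So each vertex is within blue distance 1 of the blue edge `uv`, and blue has diameter at most 3.
By symmetry, if neither colour has diameter at most 2, both have diameter exactly 3.
-/

namespace SimpleGraph

variable {V : Type*} {G : SimpleGraph V}

lemma ediam_le_three_of_forall_edist_le_one_or {u v : V} (huv : G.edist u v ≤ 1)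
    (hdom : ∀ x, G.edist x u ≤ 1 ∨ G.edist x v ≤ 1) : G.ediam ≤ 3 := by
  have hnear : ∀ x, ∃ a ∈ ({u, v} : Set V), G.edist x a ≤ 1 := fun x =>
    (hdom x).elim (fun h => ⟨u, .inl rfl, h⟩) (fun h => ⟨v, .inr rfl, h⟩)
  have hclose : ∀ a ∈ ({u, v} : Set V), ∀ b ∈ ({u, v} : Set V), G.edist a b ≤ 1 := by
    rintro a (rfl | rfl) b (rfl | rfl)
    exacts [by simp, huv, edist_comm (G := G) ▸ huv, by simp]
  refine ediam_le_of_edist_le fun x y => ?_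
  obtain ⟨a, ha, hxa⟩ := hnear x
  obtain ⟨b, hb, hyb⟩ := hnear y
  calc G.edist x y ≤ G.edist x a + G.edist a y := G.edist_triangle
    _ ≤ G.edist x a + (G.edist a b + G.edist b y) := by gcongr; exact G.edist_triangle
    _ ≤ 1 + (1 + 1) := by
        gcongr
        exacts [hclose a ha b hb, edist_comm (G := G) ▸ hyb]
    _ = 3 := by norm_num

lemma compl_edist_le_one_or_of_two_lt_edist {u v : V} (h : 2 < G.edist u v) (x : V) :
    Gᶜ.edist x u ≤ 1 ∨ Gᶜ.edist x v ≤ 1 := by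
  obtain ⟨-, -, hcommon⟩ := two_lt_edist_iff.1 h
  have hx : ¬ (G.Adj x u ∧ G.Adj x v) := fun hx => by
    simpa [hcommon] using G.mem_commonNeighbors.2 ⟨hx.1.symm, hx.2.symm⟩
  simp only [edist_le_one_iff_adj_or_eq, compl_adj]
  tauto

lemma ediam_compl_le_three_of_two_lt_ediam (h : 2 < G.ediam) : Gᶜ.ediam ≤ 3 := by
  obtain ⟨u, v, huv⟩ : ∃ u v, 2 < G.edist u v := by simpa [ediam_le_iff] using h.not_ge
  obtain ⟨hne, hnadj, -⟩ := two_lt_edist_iff.1 huv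
  exact ediam_le_three_of_forall_edist_le_one_or
    (edist_le_one_iff_adj_or_eq.2 (.inl ⟨hne, hnadj⟩))
    (compl_edist_le_one_or_of_two_lt_edist huv)

lemma ediam_le_three_of_codisjoint {H : SimpleGraph V} (hGH : Codisjoint G H)
    (h : 2 < G.ediam) : H.ediam ≤ 3 :=
  (ediam_anti (codisjoint_iff_compl_le_right.1 hGH)).trans (ediam_compl_le_three_of_two_lt_ediam h)

end SimpleGraph

open SimpleGraph in
theorem diam_two_or_two_or_both_three_general {V : Type*}
    (red blue : SimpleGraph V) (hcol : red ⊔ blue = ⊤) :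
    red.ediam ≤ 2 ∨ blue.ediam ≤ 2 ∨ (red.ediam = 3 ∧ blue.ediam = 3) := by
  have hcod : Codisjoint red blue := codisjoint_iff.2 hcol
  rcases le_or_gt red.ediam 2 with hr | hr
  · exact .inl hr
  rcases le_or_gt blue.ediam 2 with hb | hb
  · exact .inr (.inl hb)
  exact .inr (.inr
    ⟨le_antisymm (ediam_le_three_of_codisjoint hcod.symm hb) (Order.add_one_le_of_lt hr),
      le_antisymm (ediam_le_three_of_codisjoint hcod hr) (Order.add_one_le_of_lt hb)⟩)

/-- In every red-blue colouring of the edges of a finite complete graph (on ≥ 2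
vertices), either red has diameter ≤ 2, or blue has diameter ≤ 2, or both have
diameter exactly 3 (diameter measured as `ediam`, infinite if disconnected). -/
theorem diam_two_or_two_or_both_three {V : Type*} [Fintype V] [Nontrivial V]
    (red blue : SimpleGraph V) (hcol : red ⊔ blue = ⊤) :
    red.ediam ≤ 2 ∨ blue.ediam ≤ 2 ∨ (red.ediam = 3 ∧ blue.ediam = 3) :=
  diam_two_or_two_or_both_three_general red blue hcol
end

section
/- For every finite graph G with independence number α and every 2-colouring of the edges of G, there exists a covering set for G consisting of at most α monochromatic subgraphs, each of which has diameter at most 8α² + 12α + 4. -/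
/-!
Induction on `α`. Suppose first that two vertices lie at finite distance at least `3α²` in one
colour class. A geodesic between them provides `α² + 1` vertices pairwise at distance at least `3`
in that colour. Taking one of them from each component of the other colour gives an independent
set, so some component contains a set `Y` of more than `α` of them, all within distance `α²` of one
vertex `x` of `Y`. Every independent set of size `α` meets the ball of radius `α² + 1` around `x`
in the other colour: otherwise every vertex of `Y` has a neighbour in it, joined in the first
colour, and these neighbours are distinct. So this ball, of diameter at most `2α² + 2`, is one
piece of the cover, and the rest has independence number less than `α`.

Otherwise every monochromatic component has diameter less than `3α²`. In the bipartite graph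
joining a red and a blue component when they share a vertex, a matching yields an independent set,
so by König's theorem at most `α` components cover every vertex.
-/

open Finset

section Konig

variable {α β : Type*}

theorem exists_matching_of_card_le_card_add [Fintype α] [Fintype β] (r : α → β → Prop)
    [DecidableRel r] (d : ℕ) (h : ∀ s : Finset α, #s ≤ #{b | ∃ a ∈ s, r a b} + d) :
    ∃ M : Finset (α × β), (∀ e ∈ M, r e.1 e.2) ∧ Set.InjOn Prod.fst (M : Set (α × β)) ∧
      Set.InjOn Prod.snd (M : Set (α × β)) ∧ Fintype.card α ≤ #M + d := by
  classical
  -- Hall's theorem, after adding `d` vertices on the right joined to every vertex on the left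
  let r' (a : α) : β ⊕ Fin d → Prop := Sum.elim (r a) fun _ ↦ True
  obtain ⟨f, hf, hfr⟩ := (Fintype.all_card_le_filter_rel_iff_exists_injective r').1 fun s ↦ by
    rcases s.eq_empty_or_nonempty with rfl | ⟨a, ha⟩
    · simp
    have : ({x | ∃ a ∈ s, r' a x} : Finset (β ⊕ Fin d)) =
        ({b | ∃ a ∈ s, r a b} : Finset β).disjSum univ := by
      ext (b | j) <;> simp [r']
      exact ⟨a, ha⟩
    simpa [this] using h s
  let M : Finset (α × β) := {e | f e.1 = .inl e.2}
  have hM : ∀ {e}, e ∈ M ↔ f e.1 = .inl e.2 := by simp [M]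
  refine ⟨M, fun e he ↦ ?_, fun e he e' he' hee ↦ ?_, fun e he e' he' hee ↦ ?_, ?_⟩
  · simpa [r', hM.1 he] using hfr e.1
  · have := (hM.1 he).symm.trans (hee ▸ hM.1 he')
    exact Prod.ext hee (Sum.inl_injective this)
  · have := hf ((hM.1 he).trans (hee ▸ hM.1 he').symm)
    exact Prod.ext this hee
  · let φ (a : α) : (α × β) ⊕ Fin d := Sum.map (Prod.mk a) id (f a)
    have hφ : Function.Injective φ := by
      refine Function.Injective.of_comp (f := Sum.map Prod.snd id) ?_
      convert hf using 1
      funext a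
      simp only [Function.comp, φ]
      cases f a <;> rfl
    have := card_le_card_of_injOn φ (s := univ) (t := M.disjSum univ) (fun a _ ↦ by
      rcases hfa : f a with b | j <;> simp [φ, hfa, hM]) hφ.injOn
    simpa using this

theorem exists_cover_card_le_of_matching_card_le [Finite α] [Finite β] (r : α → β → Prop) (K : ℕ)
    (h : ∀ M : Finset (α × β), (∀ e ∈ M, r e.1 e.2) → Set.InjOn Prod.fst (M : Set (α × β)) →
      Set.InjOn Prod.snd (M : Set (α × β)) → #M ≤ K) :
    ∃ (A : Finset α) (B : Finset β), #A + #B ≤ K ∧ ∀ a b, r a b → a ∈ A ∨ b ∈ B := by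
  classical
  have := Fintype.ofFinite α
  have := Fintype.ofFinite β
  let N (s : Finset α) : Finset β := {b | ∃ a ∈ s, r a b}
  -- with `s` of maximal deficiency, Hall gives a matching of size `#sᶜ + #(N s)`
  obtain ⟨s, -, hs⟩ := exists_max_image univ (fun s ↦ (#s : ℤ) - #(N s)) univ_nonempty
  have hN : #(N s) ≤ #s := by simpa [N] using hs ∅ (mem_univ _)
  have hdef (t : Finset α) : #t ≤ #(N t) + (#s - #(N s)) := by
    have := hs t (mem_univ _)
    omega
  obtain ⟨M, hMr, hM₁, hM₂, hMcard⟩ := exists_matching_of_card_le_card_add r _ hdef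
  refine ⟨sᶜ, N s, ?_, fun a b hab ↦ ?_⟩
  · have := h M hMr hM₁ hM₂
    have := card_le_univ s
    rw [card_compl]
    omega
  · by_cases ha : a ∈ s
    · exact .inr (by simpa [N] using ⟨a, ha, hab⟩)
    · exact .inl (by simpa using ha)

end Konig

namespace SimpleGraph

variable {V V' : Type*}

section IndepSetFree

variable {G : SimpleGraph V} {s : Set V} {k n : ℕ}

theorem indepSetFreeOn_univ : G.IndepSetFreeOn Set.univ n ↔ G.IndepSetFree n := by
  simp [IndepSetFree, IndepSetFreeOn]

theorem IndepSetFreeOn.card_le (h : G.IndepSetFreeOn s (k + 1)) {t : Finset V} (hts : ↑t ⊆ s)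
    (ht : G.IsIndepSet t) : #t ≤ k := by
  by_contra! hk
  obtain ⟨t', ht't, hcard⟩ := exists_subset_card_eq hk
  exact h ((coe_subset.2 ht't).trans hts) ⟨ht.mono (coe_subset.2 ht't), hcard⟩

theorem IndepSetFree.card_le (h : G.IndepSetFree (k + 1)) {t : Finset V} (ht : G.IsIndepSet t) :
    #t ≤ k :=
  (indepSetFreeOn_univ.2 h).card_le (Set.subset_univ _) ht

theorem isIndepSet_induce_iff {W : Set V} {t : Set W} :
    (G.induce W).IsIndepSet t ↔ G.IsIndepSet (Subtype.val '' t) := by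
  rw [IsIndepSet, IsIndepSet, Subtype.val_injective.injOn.pairwise_image]
  rfl

theorem indepSetFreeOn_induce_iff {W : Set V} {T : Set W} :
    (G.induce W).IndepSetFreeOn T n ↔ G.IndepSetFreeOn (Subtype.val '' T) n := by
  classical
  constructor
  · intro h t htT ⟨ht, hcard⟩
    have htW : ∀ v ∈ t, v ∈ W := fun v hv ↦ (Set.image_subset_range _ _ (htT hv)).elim
      fun w hw ↦ hw ▸ w.2
    have hmap : Subtype.val '' (t.subtype (· ∈ W) : Set W) = t := by
      conv_rhs => rw [← subtype_map_of_mem htW, coe_map]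
      rfl
    refine h (t := t.subtype (· ∈ W)) (fun w hw ↦ ?_) ⟨?_, ?_⟩
    · obtain ⟨w', hw', hww'⟩ := htT (mem_subtype.1 hw)
      rwa [← Subtype.val_injective hww']
    · rwa [isIndepSet_induce_iff, hmap]
    · rw [← card_map (Function.Embedding.subtype _), subtype_map_of_mem htW, hcard]
  · intro h t htT ⟨ht, hcard⟩
    refine h (t := t.map (Function.Embedding.subtype _)) ?_ ⟨?_, by rwa [card_map]⟩
    · rw [coe_map]
      exact Set.image_mono htT
    · rw [coe_map]
      exact isIndepSet_induce_iff.1 ht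

theorem indepSetFree_induce_iff {W : Set V} :
    (G.induce W).IndepSetFree n ↔ G.IndepSetFreeOn W n := by
  rw [← indepSetFreeOn_univ, indepSetFreeOn_induce_iff, Subtype.coe_image_univ]

end IndepSetFree

section Metric

variable {G : SimpleGraph V} {u v : V}

theorem Hom.edist_le {G' : SimpleGraph V'} (f : G →g G') (u v : V) :
    G'.edist (f u) (f v) ≤ G.edist u v := by
  by_cases h : G.Reachable u v
  · obtain ⟨p, hp⟩ := h.exists_walk_length_eq_edist
    rw [← hp, ← p.length_map f]
    exact (p.map f).edist_le
  · rw [edist_eq_top_of_not_reachable h]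
    exact le_top

theorem edist_induce_le_length {S : Set V} {u v : S} (p : G.Walk u v)
    (hp : ∀ z ∈ p.support, z ∈ S) : (G.induce S).edist u v ≤ p.length := by
  have hlen : (p.induce S hp).length = p.length := by
    have := congrArg Walk.length (p.map_induce hp)
    rwa [Walk.length_map] at this
  exact hlen ▸ (p.induce S hp).edist_le

theorem edist_getVert_of_length_eq_edist (p : G.Walk u v) (hp : (p.length : ℕ∞) = G.edist u v)
    {i : ℕ} (hi : i ≤ p.length) : G.edist u (p.getVert i) = i := by
  have hle : G.edist u (p.getVert i) ≤ i := by
    simpa [hi] using (p.take i).edist_le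
  have hdrop : G.edist (p.getVert i) v ≤ (p.length - i : ℕ) := by
    simpa using (p.drop i).edist_le
  have htri := G.edist_triangle (u := u) (v := p.getVert i) (w := v)
  rw [← hp] at htri
  lift G.edist u (p.getVert i) to ℕ using ne_top_of_le_ne_top (by simp) hle with d
  have := htri.trans (by gcongr : _ ≤ (d : ℕ∞) + (p.length - i : ℕ))
  norm_cast at hle this
  norm_cast
  omega

theorem exists_finset_pairwise_two_lt_edist (h : G.Reachable u v) {m : ℕ}
    (hm : ((3 * m : ℕ) : ℕ∞) ≤ G.edist u v) :
    ∃ X : Finset V, #X = m + 1 ∧ (X : Set V).Pairwise fun a b ↦ 2 < G.edist a b := by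
  classical
  obtain ⟨p, hp⟩ := h.exists_walk_length_eq_edist
  have hdist (j : ℕ) (hj : j ∈ range (m + 1)) : G.edist u (p.getVert (3 * j)) = (3 * j : ℕ) := by
    refine edist_getVert_of_length_eq_edist p hp ?_
    have := mem_range.1 hj
    exact_mod_cast (Nat.cast_le.2 (by omega : 3 * j ≤ 3 * m)).trans (hm.trans hp.ge)
  have hclose {i j} (hi : i ∈ range (m + 1)) (hj : j ∈ range (m + 1))
      (h : G.edist (p.getVert (3 * i)) (p.getVert (3 * j)) ≤ 2) : 3 * j ≤ 3 * i + 2 := by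
    have := (G.edist_triangle (u := u)).trans (by gcongr : _ ≤ G.edist u (p.getVert (3 * i)) + 2)
    rw [hdist i hi, hdist j hj] at this
    exact_mod_cast this
  refine ⟨(range (m + 1)).image fun j ↦ p.getVert (3 * j), ?_, ?_⟩
  · rw [card_image_of_injOn, card_range]
    intro i hi j hj hij
    have := hclose hi hj (by simp [hij])
    have := hclose hj hi (by simp [hij])
    omega
  · simp only [Set.Pairwise, coe_image, Set.mem_image, mem_coe]
    rintro _ ⟨i, hi, rfl⟩ _ ⟨j, hj, rfl⟩ hne
    by_contra! h
    have := hclose hi hj h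
    have := hclose hj hi (by rwa [edist_comm])
    exact hne (by congr 2; omega)

variable (G) in
theorem ediam_induce_ball_le (x : V) (r : ℕ) :
    (G.induce (G.ball x (r + 1))).ediam ≤ 2 * r := by
  classical
  have hx : x ∈ G.ball x (r + 1) := mem_ball_self (by positivity)
  refine (ediam_le_two_mul_eccent ⟨x, hx⟩).trans (mul_le_mul_right ?_ 2)
  rw [eccent_le_iff]
  rintro ⟨v, hv⟩
  have hv : G.edist x v ≤ r := by
    rw [mem_ball, edist_comm] at hv
    exact Order.le_of_lt_add_one hv
  obtain ⟨p, hp⟩ := (reachable_of_edist_ne_top (ne_top_of_le_ne_top (by simp) hv))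
    |>.exists_walk_length_eq_edist
  refine (edist_induce_le_length p fun z hz ↦ ?_).trans (hp ▸ hv)
  rw [mem_ball, edist_comm]
  calc G.edist x z ≤ (p.takeUntil z hz).length := (p.takeUntil z hz).edist_le
    _ ≤ p.length := by exact_mod_cast p.length_takeUntil_le_length hz
    _ ≤ r := hp ▸ hv
    _ < r + 1 := by exact_mod_cast Nat.lt_succ_self r

theorem ediam_induce_supp_le (C : G.ConnectedComponent) {D : ℕ∞}
    (hD : ∀ u v, G.Reachable u v → G.edist u v ≤ D) : (G.induce C.supp).ediam ≤ D := by
  classical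
  refine ediam_le_iff.2 fun ⟨u, hu⟩ ⟨v, hv⟩ ↦ ?_
  have huv : G.Reachable u v :=
    ConnectedComponent.exact (hu.trans hv.symm)
  obtain ⟨p, hp⟩ := huv.exists_walk_length_eq_edist
  refine (edist_induce_le_length p fun z hz ↦ ?_).trans (hp ▸ hD u v huv)
  exact (ConnectedComponent.sound ⟨p.takeUntil z hz⟩).symm.trans hu

variable (G) in
theorem ediam_induce_image_val_le (W : Set V) (S : Set W) :
    (G.induce (Subtype.val '' S)).ediam ≤ ((G.induce W).induce S).ediam := by
  let f : (G.induce W).induce S →g G.induce (Subtype.val '' S) :=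
    ⟨fun w ↦ ⟨w.1.1, w.1, w.2, rfl⟩, fun h ↦ h⟩
  refine ediam_le_iff.2 ?_
  rintro ⟨_, a, ha, rfl⟩ ⟨_, b, hb, rfl⟩
  exact (f.edist_le ⟨a, ha⟩ ⟨b, hb⟩).trans edist_le_ediam

end Metric

section Ball

variable {A B : SimpleGraph V} {K : ℕ}

theorem card_connectedComponent_induce_le [Finite V] (hind : (A ⊔ B).IndepSetFree (K + 1))
    {X : Set V} (hfar : X.Pairwise fun a b ↦ 2 < A.edist a b) :
    Nat.card (B.induce X).ConnectedComponent ≤ K := by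
  classical
  have := Fintype.ofFinite (B.induce X).ConnectedComponent
  let rep (C : (B.induce X).ConnectedComponent) : V := C.out.1
  have hrep (C : (B.induce X).ConnectedComponent) : (B.induce X).connectedComponentMk C.out = C :=
    C.out_eq
  have hinj : Function.Injective rep := fun C C' h ↦ by
    rw [← hrep C, ← hrep C', Subtype.ext h]
  rw [← Fintype.card_eq_nat_card, ← card_univ, ← card_map ⟨rep, hinj⟩]
  refine hind.card_le ?_
  simp only [coe_map, coe_univ, Set.image_univ, Function.Embedding.coeFn_mk]
  rintro _ ⟨C, rfl⟩ _ ⟨C', rfl⟩ hne (hA | hB)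
  · have : 2 < A.edist (rep C) (rep C') := hfar C.out.2 C'.out.2 hne
    rw [edist_eq_one_iff_adj.2 hA] at this
    norm_num at this
  · refine hne (congrArg rep ?_)
    rw [← hrep C, ← hrep C']
    exact ConnectedComponent.sound (Adj.reachable (G := B.induce X) hB)

theorem indepSetFreeOn_compl_ball_of_pairwise (hind : (A ⊔ B).IndepSetFree (K + 1))
    {Y : Finset V} (hY : K < #Y) (hfar : (Y : Set V).Pairwise fun a b ↦ 2 < A.edist a b)
    {x : V} {r : ℕ} (hxY : ∀ y ∈ Y, B.edist x y ≤ r) :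
    (A ⊔ B).IndepSetFreeOn (B.ball x (r + 2))ᶜ K := by
  classical
  rintro s hs ⟨hsind, rfl⟩
  have hball {y : V} (hy : B.edist x y ≤ r + 1) : y ∉ s := fun hys ↦ hs hys (by
    rw [mem_ball, edist_comm]
    exact hy.trans_lt (by norm_cast; omega))
  -- every `y ∈ Y` lies in the ball, so it has a neighbour in `s`; that edge cannot be in `B`
  have hstep : ∀ y ∈ Y, ∃ κ ∈ s, A.Adj y κ := by
    intro y hy
    obtain ⟨κ, hκ, hadj⟩ : ∃ κ ∈ s, (A ⊔ B).Adj y κ := by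
      by_contra! h
      have hins := hind.card_le (t := insert y s) <| by
        rw [coe_insert]
        exact hsind.insert fun κ hκ _ ↦ ⟨h κ hκ, fun h' ↦ h κ hκ h'.symm⟩
      rw [card_insert_of_notMem (hball ((hxY y hy).trans (by norm_cast; omega)))] at hins
      omega
    refine ⟨κ, hκ, hadj.resolve_right fun hB ↦ hball ?_ hκ⟩
    calc B.edist x κ ≤ B.edist x y + B.edist y κ := B.edist_triangle
      _ ≤ r + 1 := by rw [edist_eq_one_iff_adj.2 hB]; gcongr; exact hxY y hy
  have : ∀ y : V, ∃ κ : V, y ∈ Y → κ ∈ s ∧ A.Adj y κ := fun y ↦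
    if hy : y ∈ Y then (hstep y hy).imp fun _ ↦ fun h _ ↦ h else ⟨y, fun h ↦ (hy h).elim⟩
  choose κ hκ using this
  have hinj : Set.InjOn κ Y := by
    intro y hy y' hy' h
    by_contra hne
    refine (hfar hy hy' hne).not_ge ?_
    calc A.edist y y' ≤ A.edist y (κ y) + A.edist (κ y) y' := A.edist_triangle
      _ = 2 := by
        rw [edist_eq_one_iff_adj.2 (hκ y hy).2, h, edist_comm, edist_eq_one_iff_adj.2 (hκ y' hy').2]
        rfl
  have := card_le_card_of_injOn κ (fun y hy ↦ (hκ y hy).1) hinj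
  omega

theorem exists_indepSetFreeOn_compl_ball [Finite V] (hind : (A ⊔ B).IndepSetFree (K + 1))
    {X : Finset V} (hX : #X = K ^ 2 + 1) (hfar : (X : Set V).Pairwise fun a b ↦ 2 < A.edist a b) :
    ∃ x, (A ⊔ B).IndepSetFreeOn (B.ball x (K ^ 2 + 2))ᶜ K := by
  classical
  have := Fintype.ofFinite (B.induce (X : Set V)).ConnectedComponent
  have hXcard : Fintype.card (X : Set V) = K ^ 2 + 1 := by simpa using hX
  let cc := (B.induce (X : Set V)).connectedComponentMk
  obtain ⟨C, hC⟩ : ∃ C, K < #{w | cc w = C} := by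
    refine Fintype.exists_lt_card_fiber_of_mul_lt_card cc ?_
    have := card_connectedComponent_induce_le hind hfar
    rw [Fintype.card_eq_nat_card]
    nlinarith
  let Y : Finset V := ({w | cc w = C} : Finset (X : Set V)).map (Function.Embedding.subtype _)
  have hYX : (Y : Set V) ⊆ X := by
    intro y hy
    obtain ⟨w, -, rfl⟩ := mem_map.1 (mem_coe.1 hy)
    exact w.2
  obtain ⟨x, hx⟩ : Y.Nonempty := by rw [← card_pos, card_map]; omega
  refine ⟨x, ?_⟩
  have := indepSetFreeOn_compl_ball_of_pairwise hind (Y := Y) (by rwa [card_map]) (hfar.mono hYX)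
    (x := x) (r := K ^ 2) fun y hy ↦ ?_
  · simpa using this
  obtain ⟨x', hx', rfl⟩ := mem_map.1 hx
  obtain ⟨y', hy', rfl⟩ := mem_map.1 hy
  -- `x'` and `y'` lie in a common component of a graph on `K ^ 2 + 1` vertices
  obtain ⟨p⟩ : (B.induce (X : Set V)).Reachable x' y' :=
    ConnectedComponent.exact (((mem_filter.1 hx').2).trans (mem_filter.1 hy').2.symm)
  calc B.edist x' y' ≤ (B.induce (X : Set V)).edist x' y' := (Embedding.induce _).toHom.edist_le _ _
    _ ≤ p.bypass.length := p.bypass.edist_le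
    _ ≤ K ^ 2 := by
      have := p.bypass_isPath.length_lt
      rw [hXcard] at this
      exact_mod_cast Nat.le_of_lt_succ this

end Ball

theorem exists_connectedComponent_cover [Finite V] (A B : SimpleGraph V) {K : ℕ}
    (hind : (A ⊔ B).IndepSetFree (K + 1)) :
    ∃ (𝒜 : Finset A.ConnectedComponent) (ℬ : Finset B.ConnectedComponent), #𝒜 + #ℬ ≤ K ∧
      ∀ v, A.connectedComponentMk v ∈ 𝒜 ∨ B.connectedComponentMk v ∈ ℬ := by
  classical
  let r (C : A.ConnectedComponent) (D : B.ConnectedComponent) : Prop :=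
    ∃ v, A.connectedComponentMk v = C ∧ B.connectedComponentMk v = D
  -- one vertex on each edge of a matching gives an independent set
  have hmatch (M : Finset (A.ConnectedComponent × B.ConnectedComponent))
      (hM : ∀ e ∈ M, r e.1 e.2)
      (h₁ : Set.InjOn Prod.fst (M : Set (A.ConnectedComponent × B.ConnectedComponent)))
      (h₂ : Set.InjOn Prod.snd (M : Set (A.ConnectedComponent × B.ConnectedComponent))) :
      #M ≤ K := by
    choose v hvA hvB using hM
    let f (e : M) : V := v e e.2
    have hf : Function.Injective f := fun e e' h ↦ Subtype.ext <|
      h₁ e.2 e'.2 (by rw [← hvA e e.2, ← hvA e' e'.2]; exact congrArg _ h)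
    have := hind.card_le (t := univ.map ⟨f, hf⟩) ?_
    · simpa using this
    simp only [coe_map, coe_univ, Set.image_univ, Function.Embedding.coeFn_mk]
    rintro _ ⟨e, rfl⟩ _ ⟨e', rfl⟩ hne (hA | hB)
    · refine hne (congrArg f (Subtype.ext (h₁ e.2 e'.2 ?_)))
      rw [← hvA e e.2, ← hvA e' e'.2]
      exact ConnectedComponent.sound hA.reachable
    · refine hne (congrArg f (Subtype.ext (h₂ e.2 e'.2 ?_)))
      rw [← hvB e e.2, ← hvB e' e'.2]
      exact ConnectedComponent.sound hB.reachable
  obtain ⟨𝒜, ℬ, hcard, hcover⟩ := exists_cover_card_le_of_matching_card_le r K hmatch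
  exact ⟨𝒜, ℬ, hcard, fun v ↦ hcover _ _ ⟨v, rfl, rfl⟩⟩

theorem exists_ediam_le_indepSetFreeOn_diff [Finite V] {c d : SimpleGraph V} {W : Set V} {K : ℕ}
    (hW : (c ⊔ d).IndepSetFreeOn W (K + 1)) {u v : W} (huv : (c.induce W).Reachable u v)
    (hdist : ((3 * K ^ 2 : ℕ) : ℕ∞) ≤ (c.induce W).edist u v) :
    ∃ S : Set V, (d.induce S).ediam ≤ 2 * (K ^ 2 + 1) ∧ (c ⊔ d).IndepSetFreeOn (W \ S) K := by
  obtain ⟨X, hX, hfar⟩ := exists_finset_pairwise_two_lt_edist huv hdist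
  have hind : (c.induce W ⊔ d.induce W).IndepSetFree (K + 1) := indepSetFree_induce_iff.2 hW
  obtain ⟨x, hx⟩ := exists_indepSetFreeOn_compl_ball hind hX hfar
  refine ⟨Subtype.val '' (d.induce W).ball x (K ^ 2 + 2), ?_, fun t ht ↦ ?_⟩
  · refine (ediam_induce_image_val_le d W _).trans ?_
    have h := ediam_induce_ball_le (d.induce W) x (K ^ 2 + 1)
    rw [show ((K ^ 2 + 1 : ℕ) : ℕ∞) + 1 = K ^ 2 + 2 by push_cast; ring] at h
    exact_mod_cast h
  · refine indepSetFreeOn_induce_iff.1 hx (ht.trans ?_)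
    rintro a ⟨haW, ha⟩
    exact ⟨⟨a, haW⟩, fun h ↦ ha ⟨_, h, rfl⟩, rfl⟩

section MonoCover

variable {G red blue c : SimpleGraph V}

theorem spanningCoe_induce_toSubgraph_le (hc : c ≤ G) (S : Set V) :
    ((toSubgraph c hc).induce S).spanningCoe ≤ c :=
  fun _ _ h ↦ h.2.2

theorem coe_induce_toSubgraph (hc : c ≤ G) (S : Set V) :
    ((toSubgraph c hc).induce S).coe = c.induce S := by
  ext x y
  exact ⟨fun h ↦ h.2.2, fun h ↦ ⟨x.2, y.2, h⟩⟩

structure IsMonoCover (red blue : SimpleGraph V) (W : Set V) (D : ℕ∞)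
    (𝒞 : Finset G.Subgraph) : Prop where
  monochromatic : ∀ H ∈ 𝒞, H.spanningCoe ≤ red ∨ H.spanningCoe ≤ blue
  ediam_le : ∀ H ∈ 𝒞, H.coe.ediam ≤ D
  covers : ∀ v ∈ W, ∃ H ∈ 𝒞, v ∈ H.verts

variable {W S : Set V} {D D' : ℕ∞} {𝒞 : Finset G.Subgraph}

theorem IsMonoCover.swap (h : IsMonoCover red blue W D 𝒞) : IsMonoCover blue red W D 𝒞 :=
  ⟨fun H hH ↦ (h.monochromatic H hH).symm, h.ediam_le, h.covers⟩

theorem IsMonoCover.of_le (h : IsMonoCover red blue W D 𝒞) (hD : D ≤ D') :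
    IsMonoCover red blue W D' 𝒞 :=
  ⟨h.monochromatic, fun H hH ↦ (h.ediam_le H hH).trans hD, h.covers⟩

theorem IsMonoCover.insert_induce [DecidableEq G.Subgraph] (h : IsMonoCover red blue (W \ S) D 𝒞)
    (hc : c ≤ G) (hcol : c = red ∨ c = blue) (hS : (c.induce S).ediam ≤ D) :
    IsMonoCover red blue W D (insert ((toSubgraph c hc).induce S) 𝒞) := by
  refine ⟨?_, ?_, fun v hv ↦ ?_⟩ <;> simp only [mem_insert, forall_eq_or_imp]
  · refine ⟨?_, h.monochromatic⟩
    rcases hcol with rfl | rfl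
    exacts [.inl (spanningCoe_induce_toSubgraph_le hc S),
      .inr (spanningCoe_induce_toSubgraph_le hc S)]
  · exact ⟨by rwa [coe_induce_toSubgraph], h.ediam_le⟩
  · by_cases hvS : v ∈ S
    · exact ⟨_, .inl rfl, hvS⟩
    · obtain ⟨H, hH, hvH⟩ := h.covers v ⟨hv, hvS⟩
      exact ⟨H, .inr hH, hvH⟩

end MonoCover

theorem exists_monoCover_of_forall_edist_le [Finite V] {G red blue : SimpleGraph V}
    (hcol : red ⊔ blue = G) {W : Set V} {K : ℕ} {D : ℕ∞} (hW : G.IndepSetFreeOn W (K + 1))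
    (hred : ∀ u v, (red.induce W).Reachable u v → (red.induce W).edist u v ≤ D)
    (hblue : ∀ u v, (blue.induce W).Reachable u v → (blue.induce W).edist u v ≤ D) :
    ∃ 𝒞 : Finset G.Subgraph, #𝒞 ≤ K ∧ IsMonoCover red blue W D 𝒞 := by
  classical
  subst hcol
  obtain ⟨𝒜, ℬ, hcard, hcover⟩ :=
    exists_connectedComponent_cover (red.induce W) (blue.induce W) (indepSetFree_induce_iff.2 hW)
  let piece {c : SimpleGraph V} (hc : c ≤ red ⊔ blue) (C : (c.induce W).ConnectedComponent) :=
    (toSubgraph c hc).induce (Subtype.val '' C.supp)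
  have hpiece {c : SimpleGraph V} (hc : c ≤ red ⊔ blue) (C : (c.induce W).ConnectedComponent)
      (hD : ∀ u v, (c.induce W).Reachable u v → (c.induce W).edist u v ≤ D) :
      (piece hc C).coe.ediam ≤ D := by
    rw [coe_induce_toSubgraph]
    exact (ediam_induce_image_val_le c W _).trans (ediam_induce_supp_le C hD)
  refine ⟨𝒜.image (piece le_sup_left) ∪ ℬ.image (piece le_sup_right), ?_, ?_, ?_, ?_⟩
  · exact (card_union_le _ _).trans ((add_le_add card_image_le card_image_le).trans hcard)
  · simp only [mem_union, mem_image]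
    rintro _ (⟨C, -, rfl⟩ | ⟨C, -, rfl⟩)
    exacts [.inl (spanningCoe_induce_toSubgraph_le _ _),
      .inr (spanningCoe_induce_toSubgraph_le _ _)]
  · simp only [mem_union, mem_image]
    rintro _ (⟨C, -, rfl⟩ | ⟨C, -, rfl⟩)
    exacts [hpiece _ C hred, hpiece _ C hblue]
  · intro v hv
    rcases hcover ⟨v, hv⟩ with h | h
    · exact ⟨_, mem_union_left _ (mem_image_of_mem _ h), _, rfl, rfl⟩
    · exact ⟨_, mem_union_right _ (mem_image_of_mem _ h), _, rfl, rfl⟩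

theorem exists_monoCover_succ_of_le_edist [Finite V] {G c d : SimpleGraph V}
    (hcol : c ⊔ d = G) {k : ℕ}
    (ih : ∀ W : Set V, G.IndepSetFreeOn W (k + 1) →
      ∃ 𝒞 : Finset G.Subgraph, #𝒞 ≤ k ∧ IsMonoCover c d W (3 * k ^ 2 + 2) 𝒞)
    {W : Set V} (hW : G.IndepSetFreeOn W (k + 2)) {u v : W} (huv : (c.induce W).Reachable u v)
    (hdist : ((3 * (k + 1) ^ 2 : ℕ) : ℕ∞) ≤ (c.induce W).edist u v) :
    ∃ 𝒞 : Finset G.Subgraph, #𝒞 ≤ k + 1 ∧ IsMonoCover c d W (3 * (k + 1) ^ 2 + 2) 𝒞 := by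
  classical
  subst hcol
  obtain ⟨S, hS, hWS⟩ := exists_ediam_le_indepSetFreeOn_diff hW huv hdist
  obtain ⟨𝒞, hcard, h𝒞⟩ := ih (W \ S) hWS
  refine ⟨_, (card_insert_le _ _).trans (by omega),
    (h𝒞.of_le ?_).insert_induce le_sup_right (.inr rfl) (hS.trans ?_)⟩
  all_goals norm_cast; nlinarith

theorem exists_monoCover [Finite V] {G red blue : SimpleGraph V} (hcol : red ⊔ blue = G) (k : ℕ)
    {W : Set V} (hW : G.IndepSetFreeOn W (k + 1)) :
    ∃ 𝒞 : Finset G.Subgraph, #𝒞 ≤ k ∧ IsMonoCover red blue W (3 * k ^ 2 + 2) 𝒞 := by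
  induction k generalizing W with
  | zero =>
    refine ⟨∅, le_rfl, by simp, by simp, fun v hv ↦ ?_⟩
    simpa using hW.card_le (t := {v}) (by simpa) (by simp)
  | succ k ih =>
    by_cases hred : ∃ u v : W, (red.induce W).Reachable u v ∧
        ((3 * (k + 1) ^ 2 : ℕ) : ℕ∞) ≤ (red.induce W).edist u v
    · obtain ⟨u, v, huv, hdist⟩ := hred
      exact exists_monoCover_succ_of_le_edist hcol (fun W ↦ ih) hW huv hdist
    by_cases hblue : ∃ u v : W, (blue.induce W).Reachable u v ∧
        ((3 * (k + 1) ^ 2 : ℕ) : ℕ∞) ≤ (blue.induce W).edist u v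
    · obtain ⟨u, v, huv, hdist⟩ := hblue
      obtain ⟨𝒞, hcard, h𝒞⟩ := exists_monoCover_succ_of_le_edist ((sup_comm _ _).trans hcol)
        (fun W hW ↦ (ih hW).imp fun _ h ↦ ⟨h.1, h.2.swap⟩) hW huv hdist
      exact ⟨𝒞, hcard, h𝒞.swap⟩
    push Not at hred hblue
    obtain ⟨𝒞, hcard, h𝒞⟩ := exists_monoCover_of_forall_edist_le hcol hW
      (fun u v h ↦ (hred u v h).le) (fun u v h ↦ (hblue u v h).le)
    exact ⟨𝒞, hcard, h𝒞.of_le (by norm_cast; omega)⟩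

end SimpleGraph

/-- Main theorem: for every finite graph `G` with independence number `α` and every
2-colouring of the edges of `G` (each edge gets at least one of red, blue), there is
a covering set of at most `α` monochromatic subgraphs, each of diameter at most
`8α² + 12α + 4` (distances measured within the subgraph). -/
theorem bounded_diameter_konig {V : Type*} [Fintype V]
    (G red blue : SimpleGraph V) (hcol : red ⊔ blue = G) (α : ℕ)
    (hα : IsGreatest {n : ℕ | ∃ s : Finset V,
      s.card = n ∧ ∀ u ∈ s, ∀ v ∈ s, u ≠ v → ¬ G.Adj u v} α) :
    ∃ 𝒞 : Finset G.Subgraph,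
      𝒞.card ≤ α ∧
      (∀ H ∈ 𝒞, H.spanningCoe ≤ red ∨ H.spanningCoe ≤ blue) ∧
      (∀ H ∈ 𝒞, ∀ u v : H.verts, H.coe.edist u v ≤ (8 * α ^ 2 + 12 * α + 4 : ℕ)) ∧
      (∀ v : V, ∃ H ∈ 𝒞, v ∈ H.verts) := by
  have hG : G.IndepSetFreeOn Set.univ (α + 1) := fun t _ ht ↦ by
    have := hα.2 ⟨t, rfl, fun u hu v hv ↦ ht.isIndepSet hu hv⟩
    have := ht.card_eq
    omega
  obtain ⟨𝒞, hcard, h𝒞⟩ := SimpleGraph.exists_monoCover hcol α hG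
  refine ⟨𝒞, hcard, h𝒞.monochromatic, fun H hH u v ↦ ?_, fun v ↦ h𝒞.covers v trivial⟩
  calc H.coe.edist u v ≤ 3 * α ^ 2 + 2 := SimpleGraph.edist_le_ediam.trans (h𝒞.ediam_le H hH)
    _ ≤ (8 * α ^ 2 + 12 * α + 4 : ℕ) := by norm_cast; nlinarith
end

section
/- If P is a shortest path in a graph H and w is any vertex of H, then the set of vertices of P at distance at most d from w in H has at most 2d+1 elements. -/
/-- If `P` is a shortest path in a graph `H` and `w` is any vertex, then at most
`2d+1` vertices of `P` are at distance at most `d` from `w`. -/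
theorem shortest_path_ball_meet {V : Type*} [Fintype V]
    (H : SimpleGraph V) (z x : V) (p : H.Walk z x) (hp : p.IsPath)
    (hshort : ∀ q : H.Walk z x, p.length ≤ q.length)
    (w : V) (d : ℕ) :
    {v | v ∈ p.support ∧ H.edist w v ≤ d}.ncard ≤ 2 * d + 1 := by
  classical
  set S : Set V := {v | v ∈ p.support ∧ H.edist w v ≤ d} with hS
  have hdist : ∀ (v) (hv : v ∈ p.support), H.dist z v = (p.takeUntil v hv).length := by
    intro v hv
    refine le_antisymm (SimpleGraph.dist_le _) ?_
    obtain ⟨q, hq⟩ :=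
      (SimpleGraph.Walk.reachable (p.takeUntil v hv)).exists_walk_length_eq_dist
    have h2 := hshort (q.append (p.dropUntil v hv))
    have h3 : (p.takeUntil v hv).length + (p.dropUntil v hv).length = p.length := by
      have h4 := congr_arg SimpleGraph.Walk.length (p.take_spec hv)
      rwa [SimpleGraph.Walk.length_append] at h4
    rw [SimpleGraph.Walk.length_append, hq] at h2
    omega
  have hget : ∀ (v) (hv : v ∈ p.support), p.getVert (H.dist z v) = v := by
    intro v hv
    have key : ((p.takeUntil v hv).append (p.dropUntil v hv)).getVert
        (p.takeUntil v hv).length = v := by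
      rw [SimpleGraph.Walk.getVert_append]
      simp
    rw [p.take_spec hv] at key
    rw [hdist v hv]
    exact key
  have hinj : Set.InjOn (H.dist z) S := by
    intro u hu v hv h
    rw [← hget u hu.1, ← hget v hv.1, h]
  have himage : (H.dist z) '' S ⊆ Set.Icc (H.dist z w - d) (H.dist z w + d) := by
    rintro _ ⟨v, hv, rfl⟩
    have hwvne : H.edist w v ≠ ⊤ := by
      refine (hv.2.trans_lt ?_).ne
      simp
    have hwv : H.Reachable w v := SimpleGraph.reachable_of_edist_ne_top hwvne
    have hdwv : H.dist w v ≤ d := by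
      have := ENat.toNat_le_toNat hv.2 (by simp)
      simpa [SimpleGraph.dist] using this
    have hzv : H.Reachable z v := SimpleGraph.Walk.reachable (p.takeUntil v hv.1)
    have hzw : H.Reachable z w := hzv.trans hwv.symm
    obtain ⟨q1, hq1⟩ := hzw.exists_walk_length_eq_dist
    obtain ⟨q2, hq2⟩ := hwv.exists_walk_length_eq_dist
    obtain ⟨q3, hq3⟩ := hzv.exists_walk_length_eq_dist
    obtain ⟨q4, hq4⟩ := hwv.symm.exists_walk_length_eq_dist
    have hub : H.dist z v ≤ H.dist z w + H.dist w v := by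
      have := SimpleGraph.dist_le (q1.append q2)
      rwa [SimpleGraph.Walk.length_append, hq1, hq2] at this
    have hlb : H.dist z w ≤ H.dist z v + H.dist w v := by
      have := SimpleGraph.dist_le (q3.append q4)
      rw [SimpleGraph.Walk.length_append, hq3, hq4] at this
      have hcomm : H.dist v w = H.dist w v := SimpleGraph.dist_comm
      omega
    constructor <;> omega
  calc S.ncard = ((H.dist z) '' S).ncard := (Set.ncard_image_of_injOn hinj).symm
    _ ≤ (Set.Icc (H.dist z w - d) (H.dist z w + d)).ncard :=
        Set.ncard_le_ncard himage (Set.finite_Icc _ _)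
    _ ≤ 2 * d + 1 := by
        have : (Set.Icc (H.dist z w - d) (H.dist z w + d)).ncard
            = (H.dist z w + d) + 1 - (H.dist z w - d) := by
          rw [Set.ncard_eq_toFinset_card', Set.toFinset_Icc, Nat.card_Icc]
        omega
end

section
/- Let G be a graph with a 2-colouring of its edges in which every monochromatic component has diameter at most D. Then there is a covering set for G of at most α(G) monochromatic subgraphs each of diameter at most D. -/
/-!
Consider the bipartite graph whose two sides are the red and the blue components, a red and a
blue component being adjacent when they share a vertex; every vertex of `G` gives an edge of it.
A vertex cover of this bipartite graph is a family of monochromatic components covering `V(G)`,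
and a matching yields an independent set of `G` of the same size: pick a common vertex of each
matched pair; two such vertices lie in different red and in different blue components, so they
are not adjacent. König's theorem therefore gives a cover by at most `α(G)` monochromatic
components, and the diameter of a component, computed inside it, is its diameter in its colour.
-/

open Finset

/-- `P` is a matching of the bipartite graph on `ι ⊕ β` in which `x : ι` is adjacent to the
elements of `t x`. -/
structure IsBipartiteMatching {ι β : Type*} (t : ι → Finset β) (P : Finset (ι × β)) :
    Prop where
  mem : ∀ p ∈ P, p.2 ∈ t p.1
  injOn_fst : Set.InjOn Prod.fst (P : Set (ι × β))
  injOn_snd : Set.InjOn Prod.snd (P : Set (ι × β))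

section Konig

variable {ι β : Type*} [Fintype ι]

theorem exists_isBipartiteMatching_of_card_le_card_biUnion_add (t : ι → Finset β) (d : ℕ)
    [DecidableEq β] (hall : ∀ s : Finset ι, #s ≤ #(s.biUnion t) + d) :
    ∃ P, IsBipartiteMatching t P ∧ Fintype.card ι ≤ #P + d := by
  -- Hall's condition holds once `d` new vertices adjacent to everything are added to `β`.
  have hall' (s : Finset ι) :
      #s ≤ #(s.biUnion fun x ↦ (t x).disjSum (univ : Finset (Fin d))) := by
    obtain rfl | ⟨x₀, hx₀⟩ := s.eq_empty_or_nonempty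
    · simp
    calc #s ≤ #(s.biUnion t) + d := hall s
      _ = #((s.biUnion t).disjSum (univ : Finset (Fin d))) := by simp
      _ ≤ _ := card_le_card ?_
    rintro (b | i) h
    · obtain ⟨x, hx, hb⟩ := mem_biUnion.1 (inl_mem_disjSum.1 h)
      exact mem_biUnion.2 ⟨x, hx, inl_mem_disjSum.2 hb⟩
    · exact mem_biUnion.2 ⟨x₀, hx₀, inr_mem_disjSum.2 (mem_univ i)⟩
  obtain ⟨f, hf, hft⟩ := (all_card_le_biUnion_card_iff_exists_injective _).1 hall'
  set P := (univ ×ˢ univ.biUnion t).filter fun p ↦ f p.1 = .inl p.2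
  have hP : ∀ x b, (x, b) ∈ P ↔ f x = .inl b := fun x b ↦ by
    refine ⟨fun h ↦ (mem_filter.1 h).2, fun h ↦ mem_filter.2 ⟨?_, h⟩⟩
    have hb : b ∈ t x := inl_mem_disjSum.1 (h ▸ hft x)
    exact mem_product.2 ⟨mem_univ x, mem_biUnion.2 ⟨x, mem_univ x, hb⟩⟩
  refine ⟨P, ⟨fun ⟨x, b⟩ h ↦ inl_mem_disjSum.1 ((hP x b).1 h ▸ hft x), ?_, ?_⟩, ?_⟩
  · rintro ⟨x, b⟩ h ⟨x', b'⟩ h' (rfl : x = x')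
    simpa [(hP x b).1 h] using (hP x b').1 h'
  · rintro ⟨x, b⟩ h ⟨x', b'⟩ h' (rfl : b = b')
    simpa using hf (((hP x b).1 h).trans ((hP x' b).1 h').symm)
  calc Fintype.card ι = #(univ.image f) := (card_image_of_injective _ hf).symm
    _ ≤ #((P.image Prod.snd).disjSum (univ : Finset (Fin d))) := by
      refine card_le_card fun a ha ↦ ?_
      obtain ⟨x, -, rfl⟩ := mem_image.1 ha
      cases hx : f x with
      | inl b => exact inl_mem_disjSum.2 (mem_image.2 ⟨(x, b), (hP x b).2 hx, rfl⟩)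
      | inr i => exact inr_mem_disjSum.2 (mem_univ i)
    _ ≤ #P + d := by
      rw [card_disjSum, card_univ, Fintype.card_fin]
      exact Nat.add_le_add_right card_image_le d

theorem exists_cover_card_le_card_isBipartiteMatching (t : ι → Finset β) :
    ∃ (A : Finset ι) (B : Finset β) (P : Finset (ι × β)), IsBipartiteMatching t P ∧
      (∀ x, ∀ b ∈ t x, x ∈ A ∨ b ∈ B) ∧ #A + #B ≤ #P := by
  classical
  -- For `S` of maximal deficiency `#S - #N(S)`, `Sᶜ` and `N(S)` cover all edges, and
  -- the deficient form of Hall's theorem provides a matching of the same size.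
  obtain ⟨S, -, hS⟩ := exists_max_image univ (fun S : Finset ι ↦ (#S : ℤ) - #(S.biUnion t))
    ⟨∅, mem_univ _⟩
  have hdef : (0 : ℤ) ≤ #S - #(S.biUnion t) := by simpa using hS ∅ (mem_univ _)
  obtain ⟨P, hP, hcard⟩ := exists_isBipartiteMatching_of_card_le_card_biUnion_add t
    (#S - #(S.biUnion t)) fun s ↦ by have := hS s (mem_univ s); omega
  refine ⟨Sᶜ, S.biUnion t, P, hP, fun x b hb ↦ ?_, ?_⟩
  · by_cases hx : x ∈ S
    · exact .inr (mem_biUnion.2 ⟨x, hx, hb⟩)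
    · exact .inl (mem_compl.2 hx)
  · rw [card_compl]
    have := card_le_univ S
    omega

end Konig

namespace SimpleGraph

variable {V : Type*}

theorem ConnectedComponent.edist_induce_supp_le {G : SimpleGraph V} (C : G.ConnectedComponent)
    (u v : C.supp) : (G.induce C.supp).edist u v ≤ G.edist u v := by
  classical
  obtain ⟨p, hp⟩ := (C.reachable_of_mem_supp u.2 v.2).exists_walk_length_eq_edist
  have hsupp : ∀ x ∈ p.support, x ∈ C.supp := fun x hx ↦
    (ConnectedComponent.sound (p.takeUntil x hx).reachable).symm.trans u.2
  calc (G.induce C.supp).edist u v ≤ (p.induce C.supp hsupp).length := edist_le _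
    _ = G.edist u v := by rw [← hp, ← Walk.length_map, Walk.map_induce]; rfl

def ConnectedComponent.toSubgraphOfLE {G R : SimpleGraph V} (hRG : R ≤ G)
    (C : R.ConnectedComponent) : G.Subgraph :=
  (SimpleGraph.toSubgraph R hRG).induce C.supp

section toSubgraphOfLE

variable {G R : SimpleGraph V} (hRG : R ≤ G) (C : R.ConnectedComponent)

theorem ConnectedComponent.spanningCoe_toSubgraphOfLE_le :
    (C.toSubgraphOfLE hRG).spanningCoe ≤ R := fun _ _ h ↦ h.2.2

theorem ConnectedComponent.coe_toSubgraphOfLE :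
    (C.toSubgraphOfLE hRG).coe = R.induce C.supp := by
  ext u v
  exact ⟨fun h ↦ h.2.2, fun h ↦ ⟨u.2, v.2, h⟩⟩

theorem ConnectedComponent.edist_coe_toSubgraphOfLE_le (u v : (C.toSubgraphOfLE hRG).verts) :
    (C.toSubgraphOfLE hRG).coe.edist u v ≤ R.edist u v := by
  rw [coe_toSubgraphOfLE]
  exact C.edist_induce_supp_le u v

end toSubgraphOfLE

/-- The bipartite graph between the components of `R` and those of `B`, with `C` adjacent to
`C'` when they share a vertex. -/
noncomputable def componentsMeeting [Finite V] (R B : SimpleGraph V) (C : R.ConnectedComponent) :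
    Finset B.ConnectedComponent :=
  (Set.toFinite (B.connectedComponentMk '' C.supp)).toFinset

theorem connectedComponentMk_mem_componentsMeeting [Finite V] (R B : SimpleGraph V) (v : V) :
    B.connectedComponentMk v ∈ componentsMeeting R B (R.connectedComponentMk v) :=
  (Set.Finite.mem_toFinset _).2 ⟨v, rfl, rfl⟩

-- One vertex in each matched pair of components; two of them lie in distinct components of
-- both colours, so they are not adjacent in `R ⊔ B`.
theorem _root_.IsBipartiteMatching.exists_isIndepSet [Finite V] {R B : SimpleGraph V}
    {P : Finset (R.ConnectedComponent × B.ConnectedComponent)}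
    (hP : IsBipartiteMatching (componentsMeeting R B) P) :
    ∃ s : Finset V, #s = #P ∧ (R ⊔ B).IsIndepSet s := by
  classical
  have hrep :
      ∀ p ∈ P, ∃ v, R.connectedComponentMk v = p.1 ∧ B.connectedComponentMk v = p.2 :=
    fun p hp ↦ by simpa [componentsMeeting] using hP.mem p hp
  choose w hw₁ hw₂ using hrep
  refine ⟨P.attach.image fun p ↦ w p.1 p.2, ?_, ?_⟩
  · refine (card_image_of_injective _ fun p q hpq ↦ Subtype.ext (Prod.ext ?_ ?_)).trans
      (card_attach ..)
    · rw [← hw₁ _ p.2, ← hw₁ _ q.2, hpq]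
    · rw [← hw₂ _ p.2, ← hw₂ _ q.2, hpq]
  · simp only [coe_image]
    rintro _ ⟨p, -, rfl⟩ _ ⟨q, -, rfl⟩ hne hadj
    refine hne (congrArg (fun p : P ↦ w p.1 p.2) (Subtype.ext ?_))
    rcases hadj with h | h
    · refine hP.injOn_fst p.2 q.2 ?_
      rw [← hw₁ _ p.2, ← hw₁ _ q.2]
      exact ConnectedComponent.connectedComponentMk_eq_of_adj h
    · refine hP.injOn_snd p.2 q.2 ?_
      rw [← hw₂ _ p.2, ← hw₂ _ q.2]
      exact ConnectedComponent.connectedComponentMk_eq_of_adj h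

end SimpleGraph

/-- If every monochromatic component of an edge 2-coloured graph has diameter at most
`D`, then there is a covering set of at most `α(G)` monochromatic subgraphs, each of
diameter at most `D`. -/
theorem cover_when_components_bounded {V : Type*} [Fintype V]
    (G red blue : SimpleGraph V) (hcol : red ⊔ blue = G) (D : ℕ)
    (hred : ∀ u v : V, red.Reachable u v → red.edist u v ≤ D)
    (hblue : ∀ u v : V, blue.Reachable u v → blue.edist u v ≤ D)
    (α : ℕ)
    (hα : IsGreatest {n : ℕ | ∃ s : Finset V,
      s.card = n ∧ ∀ u ∈ s, ∀ v ∈ s, u ≠ v → ¬ G.Adj u v} α) :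
    ∃ 𝒞 : Finset G.Subgraph,
      𝒞.card ≤ α ∧
      (∀ H ∈ 𝒞, H.spanningCoe ≤ red ∨ H.spanningCoe ≤ blue) ∧
      (∀ H ∈ 𝒞, ∀ u v : H.verts, H.coe.edist u v ≤ (D : ℕ∞)) ∧
      (∀ v : V, ∃ H ∈ 𝒞, v ∈ H.verts) := by
  classical
  subst hcol
  obtain ⟨A, B, P, hP, hcover, hcard⟩ :=
    exists_cover_card_le_card_isBipartiteMatching (SimpleGraph.componentsMeeting red blue)
  obtain ⟨s, hs, hind⟩ := hP.exists_isIndepSet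
  refine ⟨A.image (·.toSubgraphOfLE le_sup_left) ∪ B.image (·.toSubgraphOfLE le_sup_right),
    ?_, ?_, ?_, fun v ↦ ?_⟩
  · calc _ ≤ #A + #B := (card_union_le _ _).trans (add_le_add card_image_le card_image_le)
      _ ≤ #s := hs ▸ hcard
      _ ≤ α := hα.2 ⟨s, rfl, hind⟩
  · simp only [mem_union, mem_image]
    rintro _ (⟨C, -, rfl⟩ | ⟨C, -, rfl⟩)
    · exact .inl (C.spanningCoe_toSubgraphOfLE_le _)
    · exact .inr (C.spanningCoe_toSubgraphOfLE_le _)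
  · simp only [mem_union, mem_image]
    rintro _ (⟨C, -, rfl⟩ | ⟨C, -, rfl⟩) u v <;>
      refine (C.edist_coe_toSubgraphOfLE_le _ u v).trans ?_
    · exact hred _ _ (C.reachable_of_mem_supp u.2 v.2)
    · exact hblue _ _ (C.reachable_of_mem_supp u.2 v.2)
  · simp only [mem_union, mem_image]
    have hv := SimpleGraph.connectedComponentMk_mem_componentsMeeting red blue v
    rcases hcover _ _ hv with h | h
    · exact ⟨_, .inl ⟨_, h, rfl⟩, rfl⟩
    · exact ⟨_, .inr ⟨_, h, rfl⟩, rfl⟩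
end
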